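/- Let n ≥ 2 be an integer, d = n² + 3, and let D be the squarefree part of (d+1)(d−3); that is, D is squarefree and (d+1)(d−3) = f²·D for some positive integer f. Then for every odd prime p dividing d, the Legendre symbol (D/p) equals 1; in particular every odd prime divisor of d splits in ℚ(√D)/ℚ. -/

import Mathlib

private lemma zmod3_sq (x : ZMod 3) (hx : x ≠ 0) : x ^ 2 = 1 := by
  revert x; decide

private lemma zmod3_four : ((0 : ZMod 3)) ^ 2 + 4 = 1 := by decide

/-- Let `n ≥ 2`, `d = n² + 3`, and let `D` be the squarefree part of `(d+1)(d−3)`.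
Then for every odd prime `p` dividing `d`, the Legendre symbol `(D/p)` equals `1`;
in particular every odd prime divisor of `d` splits in `ℚ(√D)/ℚ`. -/
theorem stmt_4 (n d D f : ℕ) (hn : 2 ≤ n) (hd : d = n ^ 2 + 3)
    (hDsf : Squarefree D) (hf : 0 < f) (hfac : (d + 1) * (d - 3) = f ^ 2 * D) :
    ∀ p : ℕ, ∀ hp : p.Prime, p ≠ 2 → p ∣ d →
      (letI : Fact p.Prime := ⟨hp⟩; legendreSym p (D : ℤ) = 1) := by
  have hD0 : D ≠ 0 := hDsf.ne_zero
  have hn0 : n ≠ 0 := by omega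
  have hfac' : (n ^ 2 + 4) * n ^ 2 = f ^ 2 * D := by
    have h1 : d + 1 = n ^ 2 + 4 := by omega
    have h2 : d - 3 = n ^ 2 := by omega
    rw [← h1, ← h2]; exact hfac
  intro p hp hp2 hpd
  haveI : Fact p.Prime := ⟨hp⟩
  rw [hd] at hpd
  by_cases hpn : p ∣ n
  · -- then p = 3
    have hp3 : p = 3 := by
      have h1 : p ∣ n ^ 2 := Dvd.dvd.pow hpn two_ne_zero
      have h2 : p ∣ 3 := by
        have := Nat.dvd_sub hpd h1
        simpa using this
      exact (Nat.prime_dvd_prime_iff_eq hp Nat.prime_three).1 h2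
    subst hp3
    -- 3 ∤ n²+4
    have h34 : ¬ (3 ∣ n ^ 2 + 4) := by
      intro h
      have h1 : (3:ℕ) ∣ n ^ 2 := Dvd.dvd.pow hpn two_ne_zero
      have := (Nat.dvd_add_right h1).1 h
      omega
    have hf0 : f ≠ 0 := hf.ne'
    -- valuation at 3
    have e1 : ((n ^ 2 + 4) * n ^ 2).factorization 3 = 2 * n.factorization 3 := by
      rw [Nat.factorization_mul (by positivity) (pow_ne_zero _ hn0),
        Nat.factorization_pow]
      simp [Nat.factorization_eq_zero_of_not_dvd h34, two_mul]
    have e2 : (f ^ 2 * D).factorization 3 = 2 * f.factorization 3 + D.factorization 3 := by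
      rw [Nat.factorization_mul (pow_ne_zero _ hf0) hD0, Nat.factorization_pow]
      simp [two_mul]
    have e3 := congrArg (fun x => x.factorization 3) hfac'
    simp only [e1, e2] at e3
    have hle : D.factorization 3 ≤ 1 := hDsf.natFactorization_le_one 3
    have hDf3 : D.factorization 3 = 0 := by omega
    have hfn3 : f.factorization 3 = n.factorization 3 := by omega
    set a := n.factorization 3 with ha
    have hdn : 3 ^ a ∣ n := Nat.ordProj_dvd n 3
    have hdf : 3 ^ a ∣ f := by rw [← hfn3]; exact Nat.ordProj_dvd f 3
    obtain ⟨m, hm⟩ := hdn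
    obtain ⟨g, hg⟩ := hdf
    have h3pos : (0:ℕ) < 3 ^ a := pow_pos (by norm_num) a
    have h3m : ¬ 3 ∣ m := by
      rintro ⟨k, hk⟩
      have hdd : 3 ^ (n.factorization 3 + 1) ∣ n := ⟨k, by rw [← ha, hm, hk]; ring⟩
      exact Nat.pow_succ_factorization_not_dvd hn0 Nat.prime_three hdd
    have h3g : ¬ 3 ∣ g := by
      rintro ⟨k, hk⟩
      have hdd : 3 ^ (f.factorization 3 + 1) ∣ f := ⟨k, by rw [hfn3, hg, hk]; ring⟩
      exact Nat.pow_succ_factorization_not_dvd hf0 Nat.prime_three hdd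
    have key : (n ^ 2 + 4) * m ^ 2 = g ^ 2 * D := by
      apply Nat.eq_of_mul_eq_mul_left (pow_pos (by norm_num : (0:ℕ) < 3) (2 * a))
      calc 3 ^ (2 * a) * ((n ^ 2 + 4) * m ^ 2)
          = (n ^ 2 + 4) * (3 ^ a * m) ^ 2 := by ring
        _ = (3 ^ a * g) ^ 2 * D := by rw [← hm, ← hg]; exact hfac'
        _ = 3 ^ (2 * a) * (g ^ 2 * D) := by ring
    -- pass to ZMod 3
    have keyz : (((n : ZMod 3)) ^ 2 + 4) * (m : ZMod 3) ^ 2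
        = (g : ZMod 3) ^ 2 * (D : ZMod 3) := by
      have := congrArg (Nat.cast : ℕ → ZMod 3) key
      push_cast at this; exact this
    have hnz : (n : ZMod 3) = 0 := (ZMod.natCast_eq_zero_iff n 3).2 hpn
    have hmz : (m : ZMod 3) ≠ 0 := fun h => h3m ((ZMod.natCast_eq_zero_iff m 3).1 h)
    have hgz : (g : ZMod 3) ≠ 0 := fun h => h3g ((ZMod.natCast_eq_zero_iff g 3).1 h)
    rw [hnz, zmod3_sq _ hmz, zmod3_sq _ hgz] at keyz
    have hD1 : (D : ZMod 3) = 1 := by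
      rw [one_mul, mul_one] at keyz
      rw [← keyz]
      exact zmod3_four
    rw [legendreSym.eq_one_iff]
    · push_cast
      rw [hD1]; exact IsSquare.one
    · push_cast
      rw [hD1]; exact one_ne_zero
  · -- p ∤ n, hence p ∤ f
    have hpf : ¬ p ∣ f := by
      intro hpf
      have h1 : p ∣ (n ^ 2 + 4) * n ^ 2 := by
        rw [hfac']
        exact Dvd.dvd.mul_right (Dvd.dvd.pow hpf two_ne_zero) D
      rcases (Nat.Prime.dvd_mul hp).1 h1 with h | h
      · have := Nat.dvd_sub h hpd
        have h4 : p ∣ 1 := by simpa using this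
        exact hp.one_lt.ne' (Nat.dvd_one.1 h4)
      · exact hpn (hp.dvd_of_dvd_pow h)
    have hzero : ((n : ZMod p) ^ 2 + 3) = 0 := by
      have : ((n ^ 2 + 3 : ℕ) : ZMod p) = 0 := (ZMod.natCast_eq_zero_iff _ p).2 hpd
      push_cast at this; exact this
    have hcast : ((n : ZMod p) ^ 2 + 4) * (n : ZMod p) ^ 2
        = (f : ZMod p) ^ 2 * (D : ZMod p) := by
      have := congrArg (Nat.cast : ℕ → ZMod p) hfac'
      push_cast at this; exact this
    have hn4 : ((n : ZMod p) ^ 2 + 4) = 1 := by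
      have : ((n : ZMod p) ^ 2 + 4) = ((n : ZMod p) ^ 2 + 3) + 1 := by ring
      rw [this, hzero, zero_add]
    rw [hn4, one_mul] at hcast
    have hnz : (n : ZMod p) ≠ 0 := fun h => hpn ((ZMod.natCast_eq_zero_iff n p).1 h)
    have hfz : (f : ZMod p) ≠ 0 := fun h => hpf ((ZMod.natCast_eq_zero_iff f p).1 h)
    have hDz : (D : ZMod p) ≠ 0 := by
      intro h
      rw [h, mul_zero] at hcast
      exact hnz (pow_eq_zero_iff two_ne_zero |>.1 hcast)
    have hDval : (D : ZMod p) = ((n : ZMod p) * (f : ZMod p)⁻¹) ^ 2 := by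
      field_simp
      linear_combination -hcast
    rw [legendreSym.eq_one_iff]
    · push_cast
      rw [hDval]
      exact ⟨_, sq _⟩
    · push_cast
      exact hDz
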